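/- (Theorem 8, value at s = 0.) Let q be real with 0 < q < 1, α ≥ 1 an integer, d an odd positive integer, χ a Dirichlet character modulo d, and x > 0 real. Then L_q^χ(0, x | α) = ( [2:q] / [2:q^d] ) · Σ_{l=0}^{d−1} (−1)^l χ(l) q^l. -/

import Mathlib

/-!
At `s = 0` every factor `[x+m:q^α]^{-s}` equals `1`, so `L_q^χ(0, x | α) / [2:q]` is the power
series `S = ∑ (-q)^m χ(m)`, whose coefficients are `d`-periodic. Splitting off the first period
gives `S = ∑_{l<d} (-q)^l χ(l) + (-q)^d S`, and `(-q)^d = -q^d` because `d` is odd, so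
`S = (∑_{l<d} (-1)^l χ(l) q^l) / [2:q^d]`.
-/

open scoped BigOperators

/-- `[x:q] = (q^x - 1)/(q - 1)` with real exponentiation. -/
noncomputable def qNum (q x : ℝ) : ℝ := (q ^ x - 1) / (q - 1)

/-- Dirichlet `q`-`L`-function
`L_q^χ(s,x|α) = [2:q] ∑_{m≥0} q^m χ(m) (-1)^m [x+m:q^α]^{-s}`. -/
noncomputable def qLfun (q : ℝ) (d : ℕ) (χ : DirichletCharacter ℂ d) (α : ℕ)
    (s : ℂ) (x : ℝ) : ℂ :=
  (qNum q 2 : ℂ) *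
    ∑' m : ℕ, (q : ℂ) ^ m * χ (m : ZMod d) * (-1 : ℂ) ^ m *
      ((qNum (q ^ α) (x + (m : ℝ)) : ℝ) : ℂ) ^ (-s)

open Finset

lemma qNum_two {q : ℝ} (hq : q ≠ 1) : qNum q 2 = q + 1 := by
  rw [qNum, Real.rpow_two, div_eq_iff (sub_ne_zero.mpr hq)]
  ring

section PeriodicPowerSeries

variable {𝕜 : Type*} [NormedField 𝕜] [CompleteSpace 𝕜] {f : ℕ → 𝕜} {d : ℕ} {r : 𝕜}

lemma summable_pow_mul_of_periodic (hf : Function.Periodic f d) (hd : 0 < d) (hr : ‖r‖ < 1) :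
    Summable fun m => r ^ m * f m := by
  have hbound (m : ℕ) : ‖f m‖ ≤ ∑ l ∈ range d, ‖f l‖ := by
    rw [← hf.map_mod_nat m]
    exact single_le_sum (fun l _ => norm_nonneg (f l)) (mem_range.mpr (Nat.mod_lt m hd))
  refine Summable.of_norm_bounded
    ((summable_geometric_of_lt_one (norm_nonneg r) hr).mul_left (∑ l ∈ range d, ‖f l‖)) fun m => ?_
  rw [norm_mul, norm_pow, mul_comm]
  exact mul_le_mul_of_nonneg_right (hbound m) (by positivity)

lemma tsum_pow_mul_of_periodic (hf : Function.Periodic f d) (hd : 0 < d) (hr : ‖r‖ < 1) :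
    ∑' m, r ^ m * f m = (∑ l ∈ range d, r ^ l * f l) / (1 - r ^ d) := by
  have hsum := summable_pow_mul_of_periodic hf hd hr
  have hrd : r ^ d ≠ 1 := fun h => by
    simpa [h] using (norm_pow r d).trans_lt (pow_lt_one₀ (norm_nonneg r) hr hd.ne')
  have hsplit : ∑' m, r ^ m * f m = ∑ l ∈ range d, r ^ l * f l + r ^ d * ∑' m, r ^ m * f m := by
    rw [← hsum.tsum_mul_left, ← hsum.sum_add_tsum_nat_add d]
    congr 1
    refine tsum_congr fun m => ?_
    rw [hf m, pow_add]
    ring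
  rw [eq_div_iff (sub_ne_zero.mpr hrd.symm)]
  linear_combination hsplit

end PeriodicPowerSeries

lemma ZMod.periodic_comp_natCast {α : Type*} {d : ℕ} (g : ZMod d → α) :
    Function.Periodic (fun m : ℕ => g m) d := fun m => by
  simp

lemma qLfun_zero (q : ℝ) (d : ℕ) (χ : DirichletCharacter ℂ d) (α : ℕ) (x : ℝ) :
    qLfun q d χ α 0 x = (qNum q 2 : ℂ) * ∑' m : ℕ, (-(q : ℂ)) ^ m * χ (m : ZMod d) := by
  rw [qLfun]
  congr 1
  refine tsum_congr fun m => ?_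
  rw [neg_zero, Complex.cpow_zero, neg_pow]
  ring

theorem statement16_general (q : ℝ) (hq0 : 0 < q) (hq1 : q < 1) (α : ℕ)
    (d : ℕ) (hdo : Odd d) (χ : DirichletCharacter ℂ d)
    (x : ℝ) :
    qLfun q d χ α 0 x =
      ((qNum q 2 / qNum (q ^ d) 2 : ℝ) : ℂ) *
        ∑ l ∈ Finset.range d, (-1 : ℂ) ^ l * χ (l : ZMod d) * (q : ℂ) ^ l := by
  have hr : ‖-(q : ℂ)‖ < 1 := by
    rwa [norm_neg, Complex.norm_real, Real.norm_of_nonneg hq0.le]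
  have hcoeff (l : ℕ) :
      (-(q : ℂ)) ^ l * χ (l : ZMod d) = (-1) ^ l * χ (l : ZMod d) * (q : ℂ) ^ l := by
    rw [neg_pow]
    ring
  rw [qLfun_zero, tsum_pow_mul_of_periodic (ZMod.periodic_comp_natCast χ) hdo.pos hr,
    hdo.neg_pow, sub_neg_eq_add, add_comm (1 : ℂ), qNum_two hq1.ne,
    qNum_two (pow_lt_one₀ hq0.le hq1 hdo.pos.ne').ne, sum_congr rfl fun l _ => hcoeff l]
  push_cast
  ring

theorem statement16 (q : ℝ) (hq0 : 0 < q) (hq1 : q < 1) (α : ℕ) (hα : 1 ≤ α)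
    (d : ℕ) (hd0 : 0 < d) (hdo : Odd d) (χ : DirichletCharacter ℂ d)
    (x : ℝ) (hx : 0 < x) :
    qLfun q d χ α 0 x =
      ((qNum q 2 / qNum (q ^ d) 2 : ℝ) : ℂ) *
        ∑ l ∈ Finset.range d, (-1 : ℂ) ^ l * χ (l : ZMod d) * (q : ℂ) ^ l :=
  statement16_general q hq0 hq1 α d hdo χ x
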